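/- arXiv:1805.05448 — 2 statements merged into one kernel-verified Lean document; each statement's English description precedes it below -/
import Mathlib

section
/- Let G₁ be a finite weighted complete graph on 2k color-vertices where the weight w(i,j) equals the maximum distance between points of color i and color j in a finite colored planar point set P (every color nonempty). For a threshold t ∈ ℝ, G₁ restricted to edges of weight ≥ t has a perfect matching if and only if P admits a color-spanning matching whose minimum edge length is ≥ t. Consequently the MaxMin color-spanning matching value equals the maximum over thresholds t for which the thresholded graph has a perfect matching. -/
open scoped Classical

noncomputable section

abbrev Pt := EuclideanSpace ℝ (Fin 2)

/-- A color-spanning matching of a `2*k`-colored point set `P`: `k` edges whose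
`2*k` endpoints lie in `P` and have pairwise distinct colors (hence the
endpoints are pairwise distinct and all `2*k` colors are used). -/
structure CSM (k : ℕ) (P : Finset Pt) (color : Pt → Fin (2*k)) where
  e : Fin k → Pt × Pt
  mem1 : ∀ i, (e i).1 ∈ P
  mem2 : ∀ i, (e i).2 ∈ P
  colorInj : Function.Injective
    (fun x : Fin k × Bool => color (if x.2 then (e x.1).1 else (e x.1).2))

def CSM.weight {k : ℕ} {P : Finset Pt} {color : Pt → Fin (2*k)}
    (M : CSM k P color) : ℝ :=
  ∑ i, dist (M.e i).1 (M.e i).2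

def CSM.minEdge {k : ℕ} (hk : 0 < k) {P : Finset Pt} {color : Pt → Fin (2*k)}
    (M : CSM k P color) : ℝ :=
  Finset.univ.inf' ⟨⟨0, hk⟩, Finset.mem_univ _⟩ fun i => dist (M.e i).1 (M.e i).2

def CSM.maxEdge {k : ℕ} (hk : 0 < k) {P : Finset Pt} {color : Pt → Fin (2*k)}
    (M : CSM k P color) : ℝ :=
  Finset.univ.sup' ⟨⟨0, hk⟩, Finset.mem_univ _⟩ fun i => dist (M.e i).1 (M.e i).2

/-- The bichromatic farthest-pair distance between colors `c` and `d`. -/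
def farDist {k : ℕ} (P : Finset Pt) (color : Pt → Fin (2*k)) (c d : Fin (2*k)) : ℝ :=
  sSup {r : ℝ | ∃ p ∈ P, ∃ q ∈ P, color p = c ∧ color q = d ∧ dist p q = r}

/-- The bichromatic closest-pair distance between colors `c` and `d`. -/
def closeDist {k : ℕ} (P : Finset Pt) (color : Pt → Fin (2*k)) (c d : Fin (2*k)) : ℝ :=
  sInf {r : ℝ | ∃ p ∈ P, ∃ q ∈ P, color p = c ∧ color q = d ∧ dist p q = r}

/-- A perfect matching of the `2*k` colors: `k` unordered pairs (encoded as
ordered pairs) whose endpoints enumerate all `2*k` colors without repetition. -/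
def IsColorPM (k : ℕ) (μ : Fin k → Fin (2*k) × Fin (2*k)) : Prop :=
  Function.Injective (fun x : Fin k × Bool =>
    if x.2 then (μ x.1).1 else (μ x.1).2)

/-! Replacing each edge `{p, q}` of a color-spanning matching by a farthest pair of points with
the colors of `p` and `q` keeps it color-spanning and shortens no edge, while conversely the color
pairs of a color-spanning matching form a perfect matching of the colors. Hence the two threshold
conditions agree for every `t`, and the two sets of values in the supremum statement are cofinal
in each other. -/

section FarDist

variable {k : ℕ} (P : Finset Pt) (color : Pt → Fin (2*k))

lemma finite_setOf_dist_of_color (c d : Fin (2*k)) :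
    {r : ℝ | ∃ p ∈ P, ∃ q ∈ P, color p = c ∧ color q = d ∧ dist p q = r}.Finite := by
  refine ((P ×ˢ P).finite_toSet.image fun pq : Pt × Pt => dist pq.1 pq.2).subset ?_
  rintro r ⟨p, hp, q, hq, -, -, rfl⟩
  exact ⟨(p, q), Finset.mk_mem_product hp hq, rfl⟩

lemma dist_le_farDist {p q : Pt} (hp : p ∈ P) (hq : q ∈ P) :
    dist p q ≤ farDist P color (color p) (color q) :=
  le_csSup (finite_setOf_dist_of_color P color _ _).bddAbove ⟨p, hp, q, hq, rfl, rfl, rfl⟩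

lemma exists_dist_eq_farDist {c d : Fin (2*k)} (hc : ∃ p ∈ P, color p = c)
    (hd : ∃ q ∈ P, color q = d) :
    ∃ p ∈ P, ∃ q ∈ P, color p = c ∧ color q = d ∧ dist p q = farDist P color c d := by
  obtain ⟨p, hp, rfl⟩ := hc
  obtain ⟨q, hq, rfl⟩ := hd
  refine Set.Nonempty.csSup_mem ?_ (finite_setOf_dist_of_color P color _ _)
  exact ⟨dist p q, p, hp, q, hq, rfl, rfl, rfl⟩

end FarDist

namespace CSM

variable {k : ℕ} {P : Finset Pt} {color : Pt → Fin (2*k)}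

lemma isColorPM_colors (M : CSM k P color) :
    IsColorPM k fun i => (color (M.e i).1, color (M.e i).2) := by
  unfold IsColorPM
  convert M.colorInj using 2 with x
  rw [apply_ite color]

lemma le_minEdge_iff (hk : 0 < k) (M : CSM k P color) {t : ℝ} :
    t ≤ M.minEdge hk ↔ ∀ i, t ≤ dist (M.e i).1 (M.e i).2 :=
  (Finset.le_inf'_iff _ _).trans <| by simp only [Finset.mem_univ, forall_const]

end CSM

lemma exists_CSM_dist_eq_farDist {k : ℕ} {P : Finset Pt} {color : Pt → Fin (2*k)}
    (hsurj : ∀ c : Fin (2*k), ∃ p ∈ P, color p = c) {μ : Fin k → Fin (2*k) × Fin (2*k)}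
    (hμ : IsColorPM k μ) :
    ∃ M : CSM k P color, ∀ i, dist (M.e i).1 (M.e i).2 = farDist P color (μ i).1 (μ i).2 := by
  choose p hp q hq hpc hqc hpq using fun i : Fin k =>
    exists_dist_eq_farDist P color (hsurj (μ i).1) (hsurj (μ i).2)
  refine ⟨⟨fun i => (p i, q i), hp, hq, ?_⟩, hpq⟩
  unfold IsColorPM at hμ
  convert hμ using 2 with x
  simp only [apply_ite color, hpc, hqc]

theorem exists_isColorPM_le_farDist_iff {k : ℕ} {P : Finset Pt} {color : Pt → Fin (2*k)}
    (hsurj : ∀ c : Fin (2*k), ∃ p ∈ P, color p = c) (t : ℝ) :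
    (∃ μ : Fin k → Fin (2*k) × Fin (2*k), IsColorPM k μ ∧
        ∀ i, t ≤ farDist P color (μ i).1 (μ i).2) ↔
      ∃ M : CSM k P color, ∀ i, t ≤ dist (M.e i).1 (M.e i).2 := by
  constructor
  · rintro ⟨μ, hμ, ht⟩
    obtain ⟨M, hM⟩ := exists_CSM_dist_eq_farDist hsurj hμ
    exact ⟨M, fun i => (hM i).symm ▸ ht i⟩
  · rintro ⟨M, hM⟩
    exact ⟨_, M.isColorPM_colors,
      fun i => (hM i).trans (dist_le_farDist P color (M.mem1 i) (M.mem2 i))⟩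

/-- Threshold characterization of MaxMin: the farthest-pair color graph
restricted to edges of weight `≥ t` has a perfect matching iff `P` has a
color-spanning matching all of whose edges have length `≥ t`; consequently the
MaxMin color-spanning matching value equals the supremum of the thresholds `t`
for which the thresholded color graph has a perfect matching. -/
theorem maxmin_threshold_characterization
    (k : ℕ) (hk : 0 < k) (P : Finset Pt) (color : Pt → Fin (2*k))
    (hsurj : ∀ c : Fin (2*k), ∃ p ∈ P, color p = c) :
    (∀ t : ℝ,
      (∃ μ : Fin k → Fin (2*k) × Fin (2*k), IsColorPM k μ ∧
          ∀ i, t ≤ farDist P color (μ i).1 (μ i).2) ↔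
      (∃ M : CSM k P color, ∀ i, t ≤ dist (M.e i).1 (M.e i).2)) ∧
    sSup {r : ℝ | ∃ M : CSM k P color, r = M.minEdge hk} =
      sSup {t : ℝ | ∃ μ : Fin k → Fin (2*k) × Fin (2*k), IsColorPM k μ ∧
          ∀ i, t ≤ farDist P color (μ i).1 (μ i).2} := by
  have hiff := exists_isColorPM_le_farDist_iff hsurj
  refine ⟨hiff, csSup_eq_csSup_of_forall_exists_le ?_ ?_⟩
  · rintro _ ⟨M, rfl⟩
    exact ⟨_, (hiff _).2 ⟨M, (M.le_minEdge_iff hk).1 le_rfl⟩, le_rfl⟩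
  · intro t ht
    obtain ⟨M, hM⟩ := (hiff t).1 ht
    exact ⟨_, ⟨M, rfl⟩, (M.le_minEdge_iff hk).2 hM⟩

end
end

section
/- Let P be a finite set of points in ℝ² colored with 2k colors, all used. Then the MinMax color-spanning matching value equals the minimum, over all perfect matchings μ of the 2k colors, of the maximum over matched color pairs {i,j} ∈ μ of the bichromatic closest-pair distance between colors i and j. -/
/-!
The colors of a color-spanning matching form a perfect matching of the colors, and each of its
edges is at least the closest-pair distance of its color pair. Conversely, realizing every pair
of a color perfect matching by a bichromatic closest pair gives a color-spanning matching with
exactly those edge lengths. So every value of either set dominates a value of the other.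
-/

open scoped Classical

noncomputable section

lemma closeDist_set_finite {k : ℕ} (P : Finset Pt) (color : Pt → Fin (2*k))
    (c d : Fin (2*k)) :
    {r : ℝ | ∃ p ∈ P, ∃ q ∈ P, color p = c ∧ color q = d ∧ dist p q = r}.Finite := by
  refine ((P.finite_toSet.prod P.finite_toSet).image fun pq : Pt × Pt => dist pq.1 pq.2).subset ?_
  rintro r ⟨p, hp, q, hq, -, -, rfl⟩
  exact ⟨(p, q), ⟨hp, hq⟩, rfl⟩

lemma closeDist_le_dist {k : ℕ} {P : Finset Pt} {color : Pt → Fin (2*k)} {p q : Pt}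
    (hp : p ∈ P) (hq : q ∈ P) :
    closeDist P color (color p) (color q) ≤ dist p q :=
  csInf_le (closeDist_set_finite P color _ _).bddBelow ⟨p, hp, q, hq, rfl, rfl, rfl⟩

lemma exists_dist_eq_closeDist {k : ℕ} {P : Finset Pt} {color : Pt → Fin (2*k)}
    {c d : Fin (2*k)} (hc : ∃ p ∈ P, color p = c) (hd : ∃ q ∈ P, color q = d) :
    ∃ p ∈ P, ∃ q ∈ P, color p = c ∧ color q = d ∧ dist p q = closeDist P color c d := by
  obtain ⟨p, hp, rfl⟩ := hc
  obtain ⟨q, hq, rfl⟩ := hd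
  refine Set.Nonempty.csInf_mem ?_ (closeDist_set_finite P color _ _)
  exact ⟨dist p q, p, hp, q, hq, rfl, rfl, rfl⟩

lemma CSM.isColorPM_color {k : ℕ} {P : Finset Pt} {color : Pt → Fin (2*k)}
    (M : CSM k P color) : IsColorPM k fun i => (color (M.e i).1, color (M.e i).2) := by
  simpa only [IsColorPM, apply_ite color] using M.colorInj

lemma IsColorPM.exists_CSM_dist_eq_closeDist {k : ℕ} {P : Finset Pt} {color : Pt → Fin (2*k)}
    (hsurj : ∀ c : Fin (2*k), ∃ p ∈ P, color p = c)
    {μ : Fin k → Fin (2*k) × Fin (2*k)} (hμ : IsColorPM k μ) :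
    ∃ M : CSM k P color, ∀ i, dist (M.e i).1 (M.e i).2 = closeDist P color (μ i).1 (μ i).2 := by
  choose p hp q hq hpc hqd hdist using
    fun i => exists_dist_eq_closeDist (hsurj (μ i).1) (hsurj (μ i).2)
  refine ⟨⟨fun i => (p i, q i), hp, hq, ?_⟩, hdist⟩
  simpa only [IsColorPM, apply_ite color, hpc, hqd] using hμ

/-- The MinMax color-spanning matching value equals the minimum, over perfect
matchings `μ` of the `2*k` colors, of the maximum over matched color pairs of
the bichromatic closest-pair distance. -/
theorem minmax_eq_min_over_colorPM
    (k : ℕ) (hk : 0 < k) (P : Finset Pt) (color : Pt → Fin (2*k))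
    (hsurj : ∀ c : Fin (2*k), ∃ p ∈ P, color p = c) :
    sInf {r : ℝ | ∃ M : CSM k P color, r = M.maxEdge hk} =
    sInf {r : ℝ | ∃ μ : Fin k → Fin (2*k) × Fin (2*k), IsColorPM k μ ∧
        r = Finset.univ.sup' ⟨⟨0, hk⟩, Finset.mem_univ _⟩
              (fun i => closeDist P color (μ i).1 (μ i).2)} := by
  apply csInf_eq_csInf_of_forall_exists_le
  · rintro _ ⟨M, rfl⟩
    refine ⟨_, ⟨_, M.isColorPM_color, rfl⟩, ?_⟩
    exact Finset.sup'_mono_fun fun i _ => closeDist_le_dist (M.mem1 i) (M.mem2 i)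
  · rintro _ ⟨μ, hμ, rfl⟩
    obtain ⟨M, hM⟩ := hμ.exists_CSM_dist_eq_closeDist hsurj
    exact ⟨_, ⟨M, rfl⟩, (Finset.sup'_congr _ rfl fun i _ => hM i).le⟩

end
end
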